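/- Let p < q < r be primes, let n₁, n₂, n₃ ≥ 1 be integers, set n = p^{n₁} q^{n₂} r^{n₃} and A = p^{n₁−1} q^{n₂−1} r^{n₃−1}. Then the independent domination polynomial of the comaximal graph Γ(ℤ_n) is D_i(Γ(ℤ_n), x) = φ(n)·x + x^{A(p+q+r−2)} + x^{A·pq} + x^{A·pr} + x^{A·qr}. -/

import Mathlib

open Polynomial

/-- The comaximal graph of `ℤ/nℤ`: distinct `a, b` are adjacent iff the ideal
generated by `a` and `b` is the whole ring. -/
def comaximalGraph (n : ℕ) : SimpleGraph (ZMod n) where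
  Adj a b := a ≠ b ∧ Ideal.span ({a, b} : Set (ZMod n)) = ⊤
  symm := by
    constructor
    rintro a b ⟨hab, h⟩
    refine ⟨hab.symm, ?_⟩
    rwa [Set.pair_comm]
  loopless := by
    constructor
    rintro a ⟨h, -⟩
    exact h rfl

/-- `S` is an independent dominating set of `G`. -/
def IsIndepDomSet {V : Type*} (G : SimpleGraph V) (S : Finset V) : Prop :=
  (∀ a ∈ S, ∀ b ∈ S, ¬ G.Adj a b) ∧ ∀ v : V, v ∉ S → ∃ u ∈ S, G.Adj u v

/-- The independent domination polynomial `D_i(G, x) = Σ_k d_i(G,k) x^k`. -/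
noncomputable def indepDomPoly {V : Type*} (G : SimpleGraph V) : Polynomial ℝ :=
  ∑ k ∈ Finset.range (Nat.card V + 1),
    Polynomial.C ((Nat.card {S : Finset V // IsIndepDomSet G S ∧ S.card = k}) : ℝ) *
      Polynomial.X ^ k

/-- The independence polynomial `I(G, x) = Σ_k c_k x^k`. -/
noncomputable def indepPoly {V : Type*} (G : SimpleGraph V) : Polynomial ℝ :=
  ∑ k ∈ Finset.range (Nat.card V + 1),
    Polynomial.C ((Nat.card {S : Finset V //
        (∀ a ∈ S, ∀ b ∈ S, ¬ G.Adj a b) ∧ S.card = k}) : ℝ) *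
      Polynomial.X ^ k

/-!
Two residues `x, y` modulo `n` generate the unit ideal iff no prime `ℓ ∣ n` divides both, so
adjacency in `Γ(ℤ_n)` only sees the *prime support* of a residue, the set of primes of `n`
dividing it: distinct vertices are adjacent iff their supports are disjoint. An independent
dominating set is a maximal independent set, and when `n` has three prime factors there are
only three kinds: `{u}` for a unit `u` (adjacent to everything), the multiples of one prime
`ℓ` (`n / ℓ` of them), and the residues divisible by at least two of the primes (since any two
such supports meet). Inclusion–exclusion over the three pairs of primes counts the last kind
as `n / (pqr) · (p + q + r - 2)`.
-/

open Finset

theorem Nat.card_filter_range_dvd {d n : ℕ} (hd : d ∣ n) :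
    #{k ∈ range n | d ∣ k} = n / d := by
  rcases Nat.eq_zero_or_pos d with rfl | hd0
  · simp [Nat.eq_zero_of_zero_dvd hd]
  have := Nat.count_modEq_card n hd0 0
  simp_rw [Nat.count_eq_card_filter_range, Nat.modEq_zero_iff_dvd,
    Nat.mod_eq_zero_of_dvd hd] at this
  simpa using this

theorem Nat.coprime_iff_forall_mem_primeFactors {m n : ℕ} (hn : n ≠ 0) :
    m.Coprime n ↔ ∀ ℓ ∈ n.primeFactors, ¬ ℓ ∣ m := by
  rw [← not_iff_not, Nat.Prime.not_coprime_iff_dvd]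
  simp only [Nat.mem_primeFactors_of_ne_zero hn, not_forall, not_not, exists_prop]
  exact exists_congr fun _ => by tauto

theorem Nat.primeFactors_pow_mul_pow_mul_pow {p q r a b c : ℕ} (hp : p.Prime) (hq : q.Prime)
    (hr : r.Prime) (ha : a ≠ 0) (hb : b ≠ 0) (hc : c ≠ 0) :
    (p ^ a * q ^ b * r ^ c).primeFactors = {p, q, r} := by
  rw [Nat.primeFactors_mul (by simp [hp.ne_zero, hq.ne_zero]) (by simp [hr.ne_zero]),
    Nat.primeFactors_mul (by simp [hp.ne_zero]) (by simp [hq.ne_zero]),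
    Nat.primeFactors_prime_pow ha hp, Nat.primeFactors_prime_pow hb hq,
    Nat.primeFactors_prime_pow hc hr, union_assoc, ← insert_eq, ← insert_eq]

theorem Finset.two_le_card_iff_of_subset_triple {α : Type*} [DecidableEq α] {s : Finset α}
    {p q r : α} (hs : s ⊆ {p, q, r}) (hpq : p ≠ q) (hpr : p ≠ r) (hqr : q ≠ r) :
    2 ≤ #s ↔ {p, q} ⊆ s ∨ {p, r} ⊆ s ∨ {q, r} ⊆ s := by
  constructor
  · intro h
    obtain ⟨a, ha, b, hb, hab⟩ := one_lt_card.mp h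
    have ha' := hs ha
    have hb' := hs hb
    simp only [mem_insert, mem_singleton] at ha' hb'
    simp only [insert_subset_iff, singleton_subset_iff]
    rcases ha' with rfl | rfl | rfl <;> rcases hb' with rfl | rfl | rfl <;> simp_all
  · rintro (h | h | h) <;> exact (card_pair ‹_›).symm.le.trans (card_le_card h)

theorem ZMod.span_natCast_pair_eq_top_iff {n : ℕ} (a b : ℕ) :
    Ideal.span {(a : ZMod n), (b : ZMod n)} = ⊤ ↔ (a.gcd b).Coprime n := by
  have h := congrArg (Ideal.map (Int.castRingHom (ZMod n))) (span_gcd (a : ℤ) (b : ℤ))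
  simp only [Ideal.map_span, Set.image_pair, Set.image_singleton, eq_intCast,
    Int.cast_natCast] at h
  rw [← h, ← Int.coe_gcd, Int.gcd_natCast_natCast, Int.cast_natCast,
    Ideal.span_singleton_eq_top, ZMod.isUnit_iff_coprime]

theorem ZMod.card_filter_val {n : ℕ} [NeZero n] (P : ℕ → Prop) [DecidablePred P] :
    #{x : ZMod n | P x.val} = #{k ∈ range n | P k} := by
  refine card_nbij' ZMod.val (fun k => (k : ZMod n)) ?_ ?_ ?_ ?_ <;> intro x hx
  · simp_all [ZMod.val_lt]
  · simp_all [Nat.mod_eq_of_lt]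
  · simp
  · simp_all [Nat.mod_eq_of_lt]

theorem IsIndepDomSet.eq_of_subset {V : Type*} {G : SimpleGraph V} {S T : Finset V}
    (hS : IsIndepDomSet G S) (hT : ∀ a ∈ T, ∀ b ∈ T, ¬ G.Adj a b) (hST : S ⊆ T) :
    S = T := by
  refine hST.antisymm fun v hvT => ?_
  by_contra hvS
  obtain ⟨u, huS, huv⟩ := hS.2 v hvS
  exact hT u (hST huS) v hvT huv

open Classical in
theorem indepDomPoly_eq_sum {V : Type*} [Fintype V] (G : SimpleGraph V) :
    indepDomPoly G = ∑ S with IsIndepDomSet G S, (X : ℝ[X]) ^ #S := by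
  rw [← sum_fiberwise_of_maps_to (t := range (Nat.card V + 1)) (g := card)
    fun S _ => by simpa [Nat.lt_succ_iff] using card_le_univ S]
  refine sum_congr rfl fun k _ => ?_
  rw [sum_congr rfl fun S hS => by rw [(mem_filter.mp hS).2], sum_const, nsmul_eq_mul,
    filter_filter, Nat.card_eq_fintype_card, Fintype.card_subtype]
  simp

def primeSupport {n : ℕ} (x : ZMod n) : Finset ℕ := {ℓ ∈ n.primeFactors | ℓ ∣ x.val}

def multiplesOf (n : ℕ) [NeZero n] (ℓ : ℕ) : Finset (ZMod n) := {x | ℓ ∣ x.val}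

def multiplesOfTwoPrimes (n : ℕ) [NeZero n] : Finset (ZMod n) := {x | 2 ≤ #(primeSupport x)}

section PrimeSupport

variable {n : ℕ}

theorem mem_primeSupport {x : ZMod n} {ℓ : ℕ} :
    ℓ ∈ primeSupport x ↔ ℓ ∈ n.primeFactors ∧ ℓ ∣ x.val :=
  mem_filter

theorem primeSupport_subset (x : ZMod n) : primeSupport x ⊆ n.primeFactors := filter_subset _ _

theorem primeSupport_zero : primeSupport (0 : ZMod n) = n.primeFactors := by
  simp [primeSupport]

variable [NeZero n]

@[simp]
theorem mem_multiplesOf {ℓ : ℕ} {x : ZMod n} : x ∈ multiplesOf n ℓ ↔ ℓ ∣ x.val := by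
  simp [multiplesOf]

@[simp]
theorem mem_multiplesOfTwoPrimes {x : ZMod n} :
    x ∈ multiplesOfTwoPrimes n ↔ 2 ≤ #(primeSupport x) := by
  simp [multiplesOfTwoPrimes]

theorem primeSupport_eq_empty_iff (x : ZMod n) : primeSupport x = ∅ ↔ x.val.Coprime n := by
  rw [Nat.coprime_iff_forall_mem_primeFactors (NeZero.ne n), primeSupport, filter_eq_empty_iff]

theorem comaximalGraph_adj_iff (x y : ZMod n) :
    (comaximalGraph n).Adj x y ↔ x ≠ y ∧ Disjoint (primeSupport x) (primeSupport y) := by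
  have h := ZMod.span_natCast_pair_eq_top_iff (n := n) x.val y.val
  rw [ZMod.natCast_zmod_val, ZMod.natCast_zmod_val] at h
  change x ≠ y ∧ Ideal.span {x, y} = ⊤ ↔ _
  rw [h, Nat.coprime_iff_forall_mem_primeFactors (NeZero.ne n), primeSupport, primeSupport,
    disjoint_filter]
  simp only [Nat.dvd_gcd_iff, not_and]

theorem exists_primeSupport_eq {T : Finset ℕ} (hT : T ⊂ n.primeFactors) :
    ∃ x : ZMod n, primeSupport x = T := by
  have hprime : ∀ t ∈ n.primeFactors, t.Prime := fun t => Nat.prime_of_mem_primeFactors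
  obtain ⟨ℓ, hℓ, hℓT⟩ := exists_of_ssubset hT
  have hlt : ∏ t ∈ T, t < n := by
    have hdvd : (∏ t ∈ T, t) * ℓ ∣ n := by
      rw [mul_comm, ← prod_insert (f := fun t => t) hℓT]
      exact (prod_dvd_prod_of_subset _ _ _ (insert_subset hℓ hT.subset)).trans
        (Nat.prod_primeFactors_dvd n)
    have hpos : 0 < ∏ t ∈ T, t := prod_pos fun t ht => (hprime t (hT.subset ht)).pos
    calc ∏ t ∈ T, t
        _ < (∏ t ∈ T, t) * ℓ := lt_mul_of_one_lt_right hpos (hprime ℓ hℓ).one_lt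
        _ ≤ n := Nat.le_of_dvd (NeZero.pos n) hdvd
  refine ⟨(∏ t ∈ T, t : ℕ), ?_⟩
  ext q
  rw [mem_primeSupport, ZMod.val_cast_of_lt hlt]
  constructor
  · rintro ⟨hq, hdvd⟩
    obtain ⟨t, ht, hqt⟩ := ((hprime q hq).prime.dvd_finsetProd_iff _).mp hdvd
    rwa [(Nat.prime_dvd_prime_iff_eq (hprime q hq) (hprime t (hT.subset ht))).mp hqt]
  · exact fun hq => ⟨hT.subset hq, dvd_prod_of_mem _ hq⟩

theorem exists_primeSupport_eq_singleton {ℓ : ℕ} (hℓ : ℓ ∈ n.primeFactors)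
    (hn : 2 ≤ #n.primeFactors) : ∃ w : ZMod n, primeSupport w = {ℓ} :=
  exists_primeSupport_eq <| (singleton_subset_iff.mpr hℓ).ssubset_of_ne fun h => by
    rw [← h, card_singleton] at hn; omega

theorem mem_multiplesOf_iff_mem_primeSupport {ℓ : ℕ} (hℓ : ℓ ∈ n.primeFactors)
    {x : ZMod n} : x ∈ multiplesOf n ℓ ↔ ℓ ∈ primeSupport x := by
  rw [mem_multiplesOf, mem_primeSupport, and_iff_right hℓ]

theorem isIndepDomSet_singleton {u : ZMod n} (hu : primeSupport u = ∅) :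
    IsIndepDomSet (comaximalGraph n) {u} := by
  refine ⟨fun a ha b hb => by simp_all, fun v hv => ⟨u, mem_singleton_self u, ?_⟩⟩
  rw [comaximalGraph_adj_iff, hu]
  exact ⟨fun h => hv (h ▸ mem_singleton_self u), disjoint_empty_left _⟩

theorem isIndepDomSet_multiplesOf {ℓ : ℕ} (hℓ : ℓ ∈ n.primeFactors)
    (hn : 2 ≤ #n.primeFactors) : IsIndepDomSet (comaximalGraph n) (multiplesOf n ℓ) := by
  simp only [IsIndepDomSet, mem_multiplesOf_iff_mem_primeSupport hℓ]
  refine ⟨fun a ha b hb hab => ?_, fun v hv => ?_⟩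
  · exact disjoint_left.mp ((comaximalGraph_adj_iff a b).mp hab).2 ha hb
  · obtain ⟨w, hw⟩ := exists_primeSupport_eq_singleton hℓ hn
    have hℓw : ℓ ∈ primeSupport w := hw ▸ mem_singleton_self ℓ
    refine ⟨w, hℓw, (comaximalGraph_adj_iff w v).mpr ⟨?_, ?_⟩⟩
    · rintro rfl; exact hv hℓw
    · rwa [hw, disjoint_singleton_left]

theorem isIndepDomSet_multiplesOfTwoPrimes (hn : #n.primeFactors = 3) :
    IsIndepDomSet (comaximalGraph n) (multiplesOfTwoPrimes n) := by
  simp only [IsIndepDomSet, mem_multiplesOfTwoPrimes, not_le]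
  refine ⟨fun a ha b hb hab => ?_, fun v hv => ?_⟩
  · have hunion := card_le_card (union_subset (primeSupport_subset a) (primeSupport_subset b))
    have hinter := card_union_add_card_inter (primeSupport a) (primeSupport b)
    rw [disjoint_iff_inter_eq_empty.mp ((comaximalGraph_adj_iff a b).mp hab).2, card_empty]
      at hinter
    omega
  · obtain ⟨T, hTsub, hTcard⟩ := exists_subset_card_eq (s := n.primeFactors \ primeSupport v)
      (n := 2) (by rw [card_sdiff_of_subset (primeSupport_subset v)]; omega)
    have hTssub : T ⊂ n.primeFactors :=
      (hTsub.trans sdiff_subset).ssubset_of_ne fun h => by rw [h] at hTcard; omega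
    obtain ⟨w, hw⟩ := exists_primeSupport_eq hTssub
    refine ⟨w, by rw [hw, hTcard], (comaximalGraph_adj_iff w v).mpr ⟨?_, ?_⟩⟩
    · rintro rfl; rw [hw] at hv; omega
    · rw [hw]; exact disjoint_of_subset_left hTsub sdiff_disjoint

theorem isIndepDomSet_comaximalGraph_iff (hn : #n.primeFactors = 3) {S : Finset (ZMod n)} :
    IsIndepDomSet (comaximalGraph n) S ↔
      (∃ u, primeSupport u = ∅ ∧ S = {u}) ∨
        (∃ ℓ ∈ n.primeFactors, S = multiplesOf n ℓ) ∨ S = multiplesOfTwoPrimes n := by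
  refine ⟨fun hS => ?_, ?_⟩
  swap
  · rintro (⟨u, hu, rfl⟩ | ⟨ℓ, hℓ, rfl⟩ | rfl)
    exacts [isIndepDomSet_singleton hu, isIndepDomSet_multiplesOf hℓ (by omega),
      isIndepDomSet_multiplesOfTwoPrimes hn]
  have hnonadj :
      ∀ a ∈ S, ∀ b ∈ S, a = b ∨ ¬ Disjoint (primeSupport a) (primeSupport b) :=
    fun a ha b hb => by have := hS.1 a ha b hb; rw [comaximalGraph_adj_iff] at this; tauto
  by_cases hunit : ∃ u ∈ S, primeSupport u = ∅
  · obtain ⟨u, hu, hu0⟩ := hunit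
    refine Or.inl ⟨u, hu0, eq_singleton_iff_unique_mem.mpr ⟨hu, fun v hv => ?_⟩⟩
    simpa [hu0] using hnonadj v hv u hu
  by_cases hone : ∃ w ∈ S, #(primeSupport w) = 1
  · obtain ⟨w, hw, hw1⟩ := hone
    obtain ⟨ℓ, hℓ⟩ := card_eq_one.mp hw1
    have hℓn : ℓ ∈ n.primeFactors := primeSupport_subset w (hℓ ▸ mem_singleton_self ℓ)
    refine Or.inr (Or.inl ⟨ℓ, hℓn, hS.eq_of_subset
      (isIndepDomSet_multiplesOf hℓn (by omega)).1 fun v hv => ?_⟩)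
    rw [mem_multiplesOf_iff_mem_primeSupport hℓn]
    rcases hnonadj w hw v hv with rfl | h
    · simp [hℓ]
    · rwa [hℓ, disjoint_singleton_left, not_not] at h
  · refine Or.inr (Or.inr (hS.eq_of_subset (isIndepDomSet_multiplesOfTwoPrimes hn).1
      fun v hv => ?_))
    push Not at hunit hone
    have hpos := card_pos.mpr (hunit v hv)
    have := hone v hv
    rw [mem_multiplesOfTwoPrimes]
    omega

theorem injOn_multiplesOf (hn : 2 ≤ #n.primeFactors) :
    Set.InjOn (multiplesOf n) n.primeFactors := by
  intro ℓ hℓ ℓ' hℓ' h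
  obtain ⟨w, hw⟩ := exists_primeSupport_eq_singleton hℓ hn
  have hw' : w ∈ multiplesOf n ℓ' :=
    h ▸ (mem_multiplesOf_iff_mem_primeSupport hℓ).mpr (hw ▸ mem_singleton_self ℓ)
  rw [mem_multiplesOf_iff_mem_primeSupport hℓ', hw, mem_singleton] at hw'
  exact hw'.symm

theorem multiplesOf_ne_multiplesOfTwoPrimes {ℓ : ℕ} (hℓ : ℓ ∈ n.primeFactors)
    (hn : 2 ≤ #n.primeFactors) : multiplesOf n ℓ ≠ multiplesOfTwoPrimes n := by
  intro h
  obtain ⟨w, hw⟩ := exists_primeSupport_eq_singleton hℓ hn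
  have hwE : w ∈ multiplesOfTwoPrimes n :=
    h ▸ (mem_multiplesOf_iff_mem_primeSupport hℓ).mpr (hw ▸ mem_singleton_self ℓ)
  simp [hw] at hwE

open Classical in
theorem filter_isIndepDomSet_comaximalGraph (hn : #n.primeFactors = 3) :
    ({S | IsIndepDomSet (comaximalGraph n) S} : Finset (Finset (ZMod n))) =
      ({x | primeSupport x = ∅} : Finset (ZMod n)).map ⟨singleton, singleton_injective⟩ ∪
        insert (multiplesOfTwoPrimes n) (n.primeFactors.image (multiplesOf n)) := by
  ext S
  simp only [mem_filter, mem_univ, true_and, isIndepDomSet_comaximalGraph_iff hn, mem_union,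
    mem_map, mem_insert, mem_image, Function.Embedding.coeFn_mk]
  simp_rw [@eq_comm _ S]
  exact or_congr_right or_comm

theorem card_filter_primeSupport_eq_empty : #{x : ZMod n | primeSupport x = ∅} = n.totient := by
  simp_rw [primeSupport_eq_empty_iff, Nat.coprime_comm]
  rw [ZMod.card_filter_val (n.Coprime ·), Nat.totient_eq_card_coprime]

theorem card_multiplesOf {d : ℕ} (hd : d ∣ n) : #(multiplesOf n d) = n / d := by
  rw [multiplesOf, ZMod.card_filter_val (d ∣ ·), Nat.card_filter_range_dvd hd]

theorem indepDomPoly_comaximalGraph (hn : #n.primeFactors = 3) :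
    indepDomPoly (comaximalGraph n) = C (n.totient : ℝ) * X +
      ∑ ℓ ∈ n.primeFactors, X ^ (n / ℓ) + X ^ #(multiplesOfTwoPrimes n) := by
  classical
  -- `0` lies in every independent dominating set except the singletons of units.
  have hdisj : Disjoint
      (({x | primeSupport x = ∅} : Finset (ZMod n)).map ⟨singleton, singleton_injective⟩)
      (insert (multiplesOfTwoPrimes n) (n.primeFactors.image (multiplesOf n))) := by
    refine disjoint_right.mpr fun S hS hS' => ?_
    obtain ⟨u, hu, rfl⟩ := mem_map.mp hS'
    have h0 : (0 : ZMod n) ∈ ({u} : Finset (ZMod n)) := by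
      rcases mem_insert.mp hS with hE | hD
      · simp [← show multiplesOfTwoPrimes n = {u} from hE.symm, primeSupport_zero, hn]
      · obtain ⟨ℓ, -, hD⟩ := mem_image.mp hD
        change multiplesOf n ℓ = {u} at hD
        simp [← hD]
    rw [← mem_singleton.mp h0, mem_filter, primeSupport_zero] at hu
    simp [hu.2] at hn
  rw [indepDomPoly_eq_sum, filter_isIndepDomSet_comaximalGraph hn, sum_union hdisj, sum_map,
    sum_insert (by simpa using fun ℓ hℓ => multiplesOf_ne_multiplesOfTwoPrimes hℓ (by omega)),
    sum_image (injOn_multiplesOf (by omega))]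
  simp only [Function.Embedding.coeFn_mk, card_singleton, pow_one, sum_const,
    card_filter_primeSupport_eq_empty, nsmul_eq_mul, map_natCast]
  rw [sum_congr rfl fun ℓ hℓ => by rw [card_multiplesOf (Nat.dvd_of_mem_primeFactors hℓ)]]
  ring

theorem card_filter_subset_primeSupport {T : Finset ℕ} (hT : T ⊆ n.primeFactors) :
    #({x | T ⊆ primeSupport x} : Finset (ZMod n)) = n / ∏ ℓ ∈ T, ℓ := by
  have hprime (ℓ : ℕ) (hℓ : ℓ ∈ T) : Prime ℓ :=
    (Nat.prime_of_mem_primeFactors (hT hℓ)).prime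
  have hiff (x : ZMod n) : T ⊆ primeSupport x ↔ x ∈ multiplesOf n (∏ ℓ ∈ T, ℓ) := by
    rw [mem_multiplesOf]
    exact ⟨fun h => prod_primes_dvd _ hprime fun ℓ hℓ => (mem_primeSupport.mp (h hℓ)).2,
      fun h ℓ hℓ => mem_primeSupport.mpr ⟨hT hℓ, (dvd_prod_of_mem _ hℓ).trans h⟩⟩
  simp_rw [hiff, filter_mem_eq_inter, univ_inter]
  exact card_multiplesOf
    ((prod_dvd_prod_of_subset _ _ _ hT).trans (Nat.prod_primeFactors_dvd n))

theorem card_multiplesOfTwoPrimes {p q r : ℕ} (hpf : n.primeFactors = {p, q, r})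
    (hpq : p ≠ q) (hpr : p ≠ r) (hqr : q ≠ r) :
    #(multiplesOfTwoPrimes n) = n / (p * q * r) * (p + q + r - 2) := by
  set F : Finset ℕ → Finset (ZMod n) := fun T => {x | T ⊆ primeSupport x}
  have hE : multiplesOfTwoPrimes n = F {p, q} ∪ F {p, r} ∪ F {q, r} := by
    ext x
    simp only [mem_multiplesOfTwoPrimes, mem_union, F, mem_filter, mem_univ, true_and]
    exact (two_le_card_iff_of_subset_triple (hpf ▸ primeSupport_subset x) hpq hpr hqr).trans
      or_assoc.symm
  have hinter {T T' : Finset ℕ} (h : T ∪ T' = {p, q, r}) : F T ∩ F T' = F {p, q, r} := by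
    ext x
    simp [F, ← h, union_subset_iff]
  have e1 := card_union_add_card_inter (F {p, q} ∪ F {p, r}) (F {q, r})
  have e2 := card_union_add_card_inter (F {p, q}) (F {p, r})
  rw [union_inter_distrib_right, hinter (by grind), hinter (by grind), union_self] at e1
  rw [hinter (by grind)] at e2
  have hprod : ∏ ℓ ∈ ({p, q, r} : Finset ℕ), ℓ = p * q * r := by
    rw [prod_insert (by simp [hpq, hpr]), prod_pair hqr, mul_assoc]
  have hdvd : p * q * r ∣ n := hprod ▸ hpf ▸ Nat.prod_primeFactors_dvd n
  have hquot {d e : ℕ} (h : d * e = p * q * r) : n / d = n / (p * q * r) * e := by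
    rw [← h, ← Nat.div_div_eq_div_mul, Nat.div_mul_cancel (Nat.dvd_div_of_mul_dvd (h ▸ hdvd))]
  have hcard_pair {a b : ℕ} (hab : a ≠ b) (h : {a, b} ⊆ ({p, q, r} : Finset ℕ)) :
      #(F {a, b}) = n / (a * b) := by
    rw [card_filter_subset_primeSupport (hpf ▸ h), prod_pair hab]
  rw [hcard_pair hpq (by simp), hquot rfl] at e2
  rw [hcard_pair hpr (by simp), hquot (mul_right_comm p r q)] at e2
  rw [hcard_pair hqr (by simp), hquot (e := p) (by ring)] at e1
  rw [card_filter_subset_primeSupport hpf.ge, hprod] at e1 e2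
  rw [hE, Nat.mul_sub, mul_add, mul_add]
  omega

end PrimeSupport

/-- For `n = p^{n₁} q^{n₂} r^{n₃}` with primes `p < q < r`, `n₁, n₂, n₃ ≥ 1`, and
`A = p^{n₁−1} q^{n₂−1} r^{n₃−1}`,
`D_i(Γ(ℤ_n), x) = φ(n)·x + x^(A(p+q+r−2)) + x^(A·pq) + x^(A·pr) + x^(A·qr)`. -/
theorem stmt_8 (p q r n₁ n₂ n₃ : ℕ) (hp : p.Prime) (hq : q.Prime) (hr : r.Prime)
    (hpq : p < q) (hqr : q < r) (h1 : 1 ≤ n₁) (h2 : 1 ≤ n₂) (h3 : 1 ≤ n₃) :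
    indepDomPoly (comaximalGraph (p ^ n₁ * q ^ n₂ * r ^ n₃)) =
      Polynomial.C ((Nat.totient (p ^ n₁ * q ^ n₂ * r ^ n₃) : ℝ)) * Polynomial.X +
        Polynomial.X ^ ((p ^ (n₁ - 1) * q ^ (n₂ - 1) * r ^ (n₃ - 1)) * (p + q + r - 2)) +
        Polynomial.X ^ ((p ^ (n₁ - 1) * q ^ (n₂ - 1) * r ^ (n₃ - 1)) * (p * q)) +
        Polynomial.X ^ ((p ^ (n₁ - 1) * q ^ (n₂ - 1) * r ^ (n₃ - 1)) * (p * r)) +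
        Polynomial.X ^ ((p ^ (n₁ - 1) * q ^ (n₂ - 1) * r ^ (n₃ - 1)) * (q * r)) := by
  have hn : p ^ n₁ * q ^ n₂ * r ^ n₃ =
      p ^ (n₁ - 1) * q ^ (n₂ - 1) * r ^ (n₃ - 1) * (p * q * r) := by
    rw [← pow_sub_one_mul (by omega : n₁ ≠ 0) p, ← pow_sub_one_mul (by omega : n₂ ≠ 0) q,
      ← pow_sub_one_mul (by omega : n₃ ≠ 0) r]
    ring
  set A := p ^ (n₁ - 1) * q ^ (n₂ - 1) * r ^ (n₃ - 1)
  set n := p ^ n₁ * q ^ n₂ * r ^ n₃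
  have : NeZero n := ⟨by simp [n, hp.ne_zero, hq.ne_zero, hr.ne_zero]⟩
  have hpr : p ≠ r := (hpq.trans hqr).ne
  have hpf : n.primeFactors = {p, q, r} :=
    Nat.primeFactors_pow_mul_pow_mul_pow hp hq hr (by omega) (by omega) (by omega)
  have hquot {d m : ℕ} (hd : 0 < d) (h : A * (p * q * r) = m * d) : n / d = m :=
    Nat.div_eq_of_eq_mul_left hd (hn.trans h)
  rw [indepDomPoly_comaximalGraph (card_eq_three.mpr ⟨p, q, r, hpq.ne, hpr, hqr.ne, hpf⟩),
    card_multiplesOfTwoPrimes hpf hpq.ne hpr hqr.ne, hpf, sum_insert (by simp [hpq.ne, hpr]),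
    sum_pair hqr.ne, hquot (Nat.mul_pos (Nat.mul_pos hp.pos hq.pos) hr.pos) rfl,
    hquot (m := A * (q * r)) hp.pos (by ring), hquot (m := A * (p * r)) hq.pos (by ring),
    hquot (m := A * (p * q)) hr.pos (by ring), map_natCast]
  ring
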